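/- Sign multiplicativity under Littlewood decomposition: let t = 2t'+1 be odd, λ a doubled distinct partition with Littlewood decomposition (λ̃, λ⁰, λ¹, ..., λ^{t-1}). Then δ_λ = δ_{λ̃} · δ_{λ⁰}, i.e., (-1)^{D(λ)} = (-1)^{D(λ̃)} · (-1)^{D(λ⁰)}. -/

import Mathlib

open scoped Classical

/-- An integer partition, given by its (0-indexed) sequence of parts. -/
structure IntPartition where
  parts : ℕ → ℕ
  antitone : Antitone parts
  finite_support : (Function.support parts).Finite

namespace IntPartition

/-- The weight `|λ|` of a partition: the sum of its parts. -/
noncomputable def weight (p : IntPartition) : ℕ := p.finite_support.toFinset.sum p.parts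

/-- The conjugate partition, as a function: `conj j` is the number of parts `> j`. -/
noncomputable def conj (p : IntPartition) (j : ℕ) : ℕ := {i | j < p.parts i}.ncard

/-- The cells (boxes) of the Ferrers diagram, 0-indexed. -/
def cells (p : IntPartition) : Set (ℕ × ℕ) := {c | c.2 < p.parts c.1}

lemma cells_finite (p : IntPartition) : p.cells.Finite := by
  have hsub : p.cells ⊆ (Function.support p.parts) ×ˢ (Set.Iio (p.parts 0)) := by
    rintro ⟨i, j⟩ h
    have hj : j < p.parts i := h
    constructor
    · simp only [Function.mem_support]
      omega
    · exact lt_of_lt_of_le hj (p.antitone (Nat.zero_le i))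
  exact (p.finite_support.prod (Set.finite_Iio _)).subset hsub

/-- The cells of the Ferrers diagram as a finset. -/
noncomputable def cellsFinset (p : IntPartition) : Finset (ℕ × ℕ) := p.cells_finite.toFinset

/-- Hook length of the (0-indexed) box `(i,j)`:  `λ_i - j + λ*_j - i - 1` (1-indexed formula). -/
noncomputable def hook (p : IntPartition) (i j : ℕ) : ℕ := p.parts i + p.conj j - i - j - 1

/-- The multiset of hook lengths of all boxes of `p`. -/
noncomputable def hooks (p : IntPartition) : Multiset ℕ :=
  p.cellsFinset.val.map fun c => p.hook c.1 c.2

/-- The Durfee length: the side of the largest square contained in the diagram. -/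
noncomputable def durfee (p : IntPartition) : ℕ := {i | i < p.parts i}.ncard

/-- The sign `δ_λ = (-1)^{D(λ)}`. -/
noncomputable def delta (p : IntPartition) : ℤ := (-1) ^ p.durfee

/-- Self-conjugate partitions: `λ = λ*`. -/
noncomputable def IsSelfConjugate (p : IntPartition) : Prop := ∀ j, p.conj j = p.parts j

/-- Doubled distinct partitions: `λ_i = λ*_i + 1` for `i` in the Durfee square. -/
noncomputable def IsDoubledDistinct (p : IntPartition) : Prop :=
  ∀ i < p.durfee, p.parts i = p.conj i + 1

/-- `t`-cores: partitions with no hook length divisible by `t`. -/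
noncomputable def IsCore (t : ℕ) (p : IntPartition) : Prop := ∀ h ∈ p.hooks, ¬ t ∣ h

/-- The multiset of signed hook lengths `ε_h · h`, where `ε_h = -1` for boxes strictly
above the diagonal and `1` otherwise. -/
noncomputable def signedHooks (p : IntPartition) : Multiset ℤ :=
  p.cellsFinset.val.map fun c => (if c.1 < c.2 then -1 else 1) * (p.hook c.1 c.2 : ℤ)

/-- The multiset of signed hook lengths `ε_h · h` over boxes whose hook length is a
multiple of `t`. -/
noncomputable def signedHooksT (t : ℕ) (p : IntPartition) : Multiset ℤ :=
  (p.cellsFinset.filter fun c => t ∣ p.hook c.1 c.2).val.map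
    fun c => (if c.1 < c.2 then -1 else 1) * (p.hook c.1 c.2 : ℤ)

/-- The multiset of principal hook lengths (hooks of diagonal boxes). -/
noncomputable def principalHooks (p : IntPartition) : Multiset ℕ :=
  (Finset.range p.durfee).val.map fun i => p.hook i i

lemma conj_set_finite (p : IntPartition) (j : ℕ) : {i | j < p.parts i}.Finite := by
  apply p.finite_support.subset
  intro i hi
  simp only [Set.mem_setOf_eq] at hi
  simp only [Function.mem_support]
  omega

/-- The conjugate partition, as a `Partition`. -/
noncomputable def conjugate (p : IntPartition) : IntPartition where
  parts := p.conj
  antitone := fun a b hab =>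
    Set.ncard_le_ncard (fun i hi => lt_of_le_of_lt hab hi) (p.conj_set_finite a)
  finite_support := by
    apply (Set.finite_Iio (p.parts 0)).subset
    intro j hj
    obtain ⟨i, hi⟩ := Set.nonempty_of_ncard_ne_zero hj
    exact lt_of_lt_of_le hi (p.antitone (Nat.zero_le i))

end IntPartition

/-- "Infinite" product `∏_{k ≥ 1} f k` of power series, defined coefficientwise;
this is the honest infinite product whenever `f k ≡ 1 mod X^k`. -/
noncomputable def Pinf {R : Type*} [CommRing R] (f : ℕ → PowerSeries R) : PowerSeries R :=
  PowerSeries.mk fun n => PowerSeries.coeff (R := R) n (∏ k ∈ Finset.range (n + 1), f (k + 1))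

/-- The Euler-type product `E R m = ∏_{k ≥ 1} (1 - x^{m k}) = (q^m; q^m)_∞`. -/
noncomputable def E (R : Type*) [CommRing R] (m : ℕ) : PowerSeries R :=
  Pinf fun k => 1 - PowerSeries.X ^ (m * k)

/-- The binomial series `(1 - x^m)^a` for an exponent `a` in a binomial ring. -/
noncomputable def binomSeries {R : Type*} [CommRing R] [BinomialRing R] (a : R) (m : ℕ) :
    PowerSeries R :=
  PowerSeries.mk fun n => if m ∣ n then (-1) ^ (n / m) * Ring.choose a (n / m) else 0

/-- `m` is the position of a vertical step (a `0`) in the canonical bi-infinite binary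
word of the partition `p`. -/
def zeroPos (p : IntPartition) (m : ℤ) : Prop := ∃ i : ℕ, (p.parts i : ℤ) - i - 1 = m

/-- The Littlewood decomposition, as a relation: `core` and `quot` are the `t`-core and
`t`-quotient of `lam`, expressed via the binary-word encoding: the `k`-th subsequence of
the word of `lam` is the word of `quot k` (up to the shift `s k`), and the `k`-th
subsequence of the word of `core` is the corresponding flushed word `...000111...` with
the same charge. -/
def IsLittlewood (t : ℕ) (lam core : IntPartition) (quot : ℕ → IntPartition) : Prop :=
  ∃ s : ℕ → ℤ,
    (∀ k < t, ∀ j : ℤ, zeroPos (quot k) j ↔ zeroPos lam (t * (j + s k) + k)) ∧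
    (∀ k < t, ∀ j : ℤ, zeroPos core (t * (j + s k) + k) ↔ j < 0)

/-!
Write the binary word of a partition as the set of its β-numbers `λ_i - i - 1` (the positions
of its `0`s), viewed as beads on an abacus; `D(λ)` is the number of beads at positions `≥ 0`.
For doubled distinct `λ` the word is antipodal: `0` is not a bead and, for `m ≠ 0`, `m` is a bead
exactly when `-m` is not. Cutting the word into the `t` runners of the `t`-abacus, let `Z_k` count
the beads of runner `k` at positions `≥ 0` and `O_k` its gaps at negative positions. Antipodality
makes runner `t - k` the reflected complement of runner `k`, so `Z_{t-k} = O_k`, and makes runner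
`0` antipodal, so `Z_0 = O_0`. The charge identity for `λᵏ` gives `Z_k - O_k = s_k`, the shift of
runner `k`, while runner `k` of the core contributes `max(s_k, 0)` beads. As `t` is odd, runners
`1, …, t - 1` pair off and `D(λ) = D(λ̃) + D(λ⁰) + 2 ∑_{1 ≤ k ≤ t'} min(Z_k, O_k)`.
-/

lemma Set.ncard_preimage_of_bijective {α β : Type*} {f : α → β} (hf : f.Bijective)
    (s : Set β) : (f ⁻¹' s).ncard = s.ncard :=
  congrArg ENat.toNat (Set.encard_preimage_of_bijective hf s)

theorem IsLowerSet.mem_iff_lt_ncard {S : Set ℕ} (hS : IsLowerSet S) (hfin : S.Finite) (i : ℕ) :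
    i ∈ S ↔ i < S.ncard := by
  obtain h | ⟨a, rfl⟩ := hS.eq_univ_or_Iio
  · exact absurd (h ▸ hfin) Set.infinite_univ
  · simp

lemma pairwiseDisjoint_image_mul_add_range {t : ℕ} (S : ℕ → Set ℤ) :
    (Finset.range t : Set ℕ).PairwiseDisjoint fun k => (fun j : ℤ => t * j + k) '' S k := by
  intro k hk l hl hkl
  refine Set.disjoint_left.2 ?_
  rintro _ ⟨j, -, rfl⟩ ⟨j', -, h⟩
  simp only [Finset.coe_range, Set.mem_Iio] at hk hl
  have hmod := congrArg (· % (t : ℤ)) h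
  simp only [Int.mul_add_emod_self_left] at hmod
  rw [Int.emod_eq_of_lt (by positivity) (by omega),
    Int.emod_eq_of_lt (by positivity) (by omega)] at hmod
  exact hkl (by exact_mod_cast hmod.symm)

lemma Finset.sum_range_two_mul_add_one {M : Type*} [AddCommMonoid M] (f : ℕ → M) (n : ℕ) :
    ∑ k ∈ range (2 * n + 1), f k = f 0 + ∑ k ∈ range n, (f (k + 1) + f (2 * n - k)) := by
  rw [sum_range_succ', two_mul, sum_range_add, sum_add_distrib, add_comm,
    ← sum_range_reflect (fun k => f (n + k + 1))]
  congr 2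
  refine sum_congr rfl fun k hk => ?_
  have := mem_range.1 hk
  congr 1
  omega

lemma sum_range_eq_sum_tsub_add_two_mul_sum_min (Z O : ℕ → ℕ) (n : ℕ) (h0 : Z 0 = O 0)
    (hZ : ∀ k, 0 < k → k < 2 * n + 1 → Z (2 * n + 1 - k) = O k) :
    ∑ k ∈ Finset.range (2 * n + 1), Z k = ∑ k ∈ Finset.range (2 * n + 1), (Z k - O k) + Z 0
      + 2 * ∑ k ∈ Finset.range n, min (Z (k + 1)) (O (k + 1)) := by
  rw [Finset.sum_range_two_mul_add_one, Finset.sum_range_two_mul_add_one, Finset.mul_sum, h0,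
    Nat.sub_self, zero_add]
  suffices ∑ k ∈ Finset.range n, (Z (k + 1) + Z (2 * n - k)) = ∑ k ∈ Finset.range n,
      ((Z (k + 1) - O (k + 1) + (Z (2 * n - k) - O (2 * n - k))) +
        2 * min (Z (k + 1)) (O (k + 1))) by
    rw [this, Finset.sum_add_distrib]
    ring
  refine Finset.sum_congr rfl fun k hk => ?_
  have hk := Finset.mem_range.1 hk
  have hZk := hZ (k + 1) (by omega) (by omega)
  have hOk := hZ (2 * n - k) (by omega) (by omega)
  rw [show 2 * n + 1 - (k + 1) = 2 * n - k by omega] at hZk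
  rw [show 2 * n + 1 - (2 * n - k) = k + 1 by omega] at hOk
  omega

section Word

variable (P Q : ℤ → Prop)

noncomputable def beadsFrom (c : ℤ) : ℕ := {m | c ≤ m ∧ P m}.ncard

noncomputable def gapsBelow (c : ℤ) : ℕ := {m | m < c ∧ ¬ P m}.ncard

noncomputable def charge (c : ℤ) : ℤ := (beadsFrom P c : ℤ) - gapsBelow P c + c

def runner (t : ℕ) (k : ℤ) : ℤ → Prop := fun j => P (t * j + k)

def IsAntipodal : Prop := ¬ P 0 ∧ ∀ m ≠ 0, P m ↔ ¬ P (-m)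

variable {P Q}

lemma beadsFrom_comp_sub (s c : ℤ) : beadsFrom (fun j => Q (j - s)) c = beadsFrom Q (c - s) := by
  refine (congrArg Set.ncard ?_).trans
    (Set.ncard_preimage_of_bijective (Equiv.subRight s).bijective _)
  ext m
  simp only [Set.mem_ofPred_eq, Set.mem_preimage, Equiv.subRight_apply]
  constructor <;> rintro ⟨h1, h2⟩ <;> exact ⟨by omega, h2⟩

lemma gapsBelow_comp_sub (s c : ℤ) : gapsBelow (fun j => Q (j - s)) c = gapsBelow Q (c - s) := by
  refine (congrArg Set.ncard ?_).trans
    (Set.ncard_preimage_of_bijective (Equiv.subRight s).bijective _)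
  ext m
  simp only [Set.mem_ofPred_eq, Set.mem_preimage, Equiv.subRight_apply]
  constructor <;> rintro ⟨h1, h2⟩ <;> exact ⟨by omega, h2⟩

lemma charge_comp_sub (s c : ℤ) : charge (fun j => Q (j - s)) c = charge Q (c - s) + s := by
  rw [charge, charge, beadsFrom_comp_sub, gapsBelow_comp_sub]
  ring

lemma beadsFrom_lt (a c : ℤ) : beadsFrom (· < a) c = (a - c).toNat := by
  rw [beadsFrom, ← Int.card_Ico, ← Set.ncard_coe_finset, Finset.coe_Ico]
  rfl

lemma beadsFrom_compl_reflect : beadsFrom (fun j => ¬ Q (-1 - j)) 0 = gapsBelow Q 0 := by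
  refine (congrArg Set.ncard ?_).trans
    (Set.ncard_preimage_of_bijective (Equiv.subLeft (-1)).bijective _)
  ext m
  simp only [Set.mem_ofPred_eq, Set.mem_preimage, Equiv.subLeft_apply]
  constructor <;> rintro ⟨h1, h2⟩ <;> exact ⟨by omega, h2⟩

lemma IsAntipodal.beadsFrom_zero (hP : IsAntipodal P) : beadsFrom P 0 = gapsBelow P 0 := by
  refine (congrArg Set.ncard ?_).trans
    (Set.ncard_preimage_of_bijective (Equiv.neg ℤ).bijective _)
  ext m
  simp only [Set.mem_ofPred_eq, Set.mem_preimage, Equiv.neg_apply]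
  rcases eq_or_ne m 0 with rfl | hm
  · simp [hP.1]
  · rw [hP.2 m hm]
    exact and_congr_left' (by omega)

lemma beadsFrom_eq_add_ite (c : ℤ) (hfin : {m | c + 1 ≤ m ∧ P m}.Finite) :
    beadsFrom P c = beadsFrom P (c + 1) + if P c then 1 else 0 := by
  by_cases hc : P c
  · have : {m | c ≤ m ∧ P m} = insert c {m | c + 1 ≤ m ∧ P m} := by
      ext m
      simp only [Set.mem_ofPred_eq, Set.mem_insert_iff]
      constructor
      · rintro ⟨h1, h2⟩
        rcases h1.eq_or_lt with rfl | h1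
        exacts [Or.inl rfl, Or.inr ⟨h1, h2⟩]
      · rintro (rfl | ⟨h1, h2⟩)
        exacts [⟨le_rfl, hc⟩, ⟨by omega, h2⟩]
    rw [beadsFrom, this, Set.ncard_insert_of_notMem (by simp) hfin, if_pos hc, beadsFrom]
  · rw [if_neg hc, add_zero, beadsFrom, beadsFrom]
    congr 1
    ext m
    simp only [Set.mem_ofPred_eq]
    constructor
    · rintro ⟨h1, h2⟩
      exact ⟨lt_of_le_of_ne h1 (by rintro rfl; exact hc h2), h2⟩
    · rintro ⟨h1, h2⟩
      exact ⟨by omega, h2⟩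

lemma gapsBelow_add_one (c : ℤ) (hfin : {m | m < c ∧ ¬ P m}.Finite) :
    gapsBelow P (c + 1) = gapsBelow P c + if P c then 0 else 1 := by
  by_cases hc : P c
  · rw [if_pos hc, add_zero, gapsBelow, gapsBelow]
    congr 1
    ext m
    simp only [Set.mem_ofPred_eq]
    constructor
    · rintro ⟨h1, h2⟩
      exact ⟨lt_of_le_of_ne (by omega) (by rintro rfl; exact h2 hc), h2⟩
    · rintro ⟨h1, h2⟩
      exact ⟨by omega, h2⟩
  · have : {m | m < c + 1 ∧ ¬ P m} = insert c {m | m < c ∧ ¬ P m} := by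
      ext m
      simp only [Set.mem_ofPred_eq, Set.mem_insert_iff]
      constructor
      · rintro ⟨h1, h2⟩
        rcases (Int.lt_add_one_iff.1 h1).eq_or_lt with rfl | h1
        exacts [Or.inl rfl, Or.inr ⟨h1, h2⟩]
      · rintro (rfl | ⟨h1, h2⟩)
        exacts [⟨by omega, hc⟩, ⟨by omega, h2⟩]
    rw [gapsBelow, this, Set.ncard_insert_of_notMem (by simp) hfin, if_neg hc, gapsBelow]

lemma charge_add_one (c : ℤ) (hbeads : {m | c + 1 ≤ m ∧ P m}.Finite)
    (hgaps : {m | m < c ∧ ¬ P m}.Finite) : charge P (c + 1) = charge P c := by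
  have hb := beadsFrom_eq_add_ite c hbeads
  have hg := gapsBelow_add_one c hgaps
  simp only [charge]
  split_ifs at hb hg <;> omega

end Word

section Runner

variable {P Q : ℤ → Prop}

lemma runner_eq_comp_sub {t : ℕ} {k s : ℤ}
    (h : ∀ j, Q j ↔ P (t * (j + s) + k)) : runner P t k = fun j => Q (j - s) := by
  funext j
  rw [propext (h _), sub_add_cancel]
  rfl

lemma IsAntipodal.runner_zero (hP : IsAntipodal P) {t : ℕ} (ht : 0 < t) :
    IsAntipodal (runner P t 0) := by
  refine ⟨by simpa [runner] using hP.1, fun j hj => ?_⟩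
  have hne : (t : ℤ) * j ≠ 0 := mul_ne_zero (by omega) hj
  simpa [runner, mul_neg] using hP.2 _ hne

lemma IsAntipodal.runner_sub (hP : IsAntipodal P) {t : ℕ} {k : ℤ} (hk : ¬ (t : ℤ) ∣ k) :
    runner P t (t - k) = fun j => ¬ runner P t k (-1 - j) := by
  funext j
  have hne : (t : ℤ) * j + (t - k) ≠ 0 := fun h => hk ⟨j + 1, by linarith⟩
  rw [runner, propext (hP.2 _ hne), runner]
  congr 2
  ring

lemma IsAntipodal.beadsFrom_runner_sub (hP : IsAntipodal P) {t k : ℕ} (hk0 : 0 < k)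
    (hkt : k < t) : beadsFrom (runner P t ↑(t - k)) 0 = gapsBelow (runner P t k) 0 := by
  have hk : ¬ (t : ℤ) ∣ k := by exact_mod_cast Nat.not_dvd_of_pos_of_lt hk0 hkt
  rw [Nat.cast_sub hkt.le, hP.runner_sub hk, beadsFrom_compl_reflect]

lemma beadsFrom_zero_eq_sum_runner {t : ℕ} (ht : 0 < t) (hfin : {m | 0 ≤ m ∧ P m}.Finite) :
    beadsFrom P 0 = ∑ k ∈ Finset.range t, beadsFrom (runner P t k) 0 := by
  have ht' : (0 : ℤ) < t := by exact_mod_cast ht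
  have hunion : {m | 0 ≤ m ∧ P m} = ⋃ k ∈ (Finset.range t : Set ℕ),
      (fun j : ℤ => t * j + k) '' {j | 0 ≤ j ∧ runner P t k j} := by
    ext m
    simp only [Set.mem_ofPred_eq, Set.mem_iUnion, Finset.coe_range, Set.mem_Iio, Set.mem_image,
      exists_prop]
    constructor
    · rintro ⟨hm, hPm⟩
      have hdiv := Int.mul_ediv_add_emod m t
      have hmod := Int.emod_nonneg m ht'.ne'
      refine ⟨(m % t).toNat, by have := Int.emod_lt_of_pos m ht'; omega, m / t,
        ⟨Int.ediv_nonneg hm ht'.le, ?_⟩, by omega⟩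
      rw [runner, Int.toNat_of_nonneg hmod, hdiv]
      exact hPm
    · rintro ⟨k, -, j, ⟨hj, hPj⟩, rfl⟩
      exact ⟨by positivity, hPj⟩
  rw [beadsFrom, hunion, Set.Finite.ncard_biUnion (Finset.finite_toSet _)
    (fun k _ => hfin.subset ?_) (pairwiseDisjoint_image_mul_add_range _), finsum_mem_coe_finset]
  · exact Finset.sum_congr rfl fun k _ =>
      Set.ncard_image_of_injective _ fun a b h => by simpa [ht.ne'] using h
  · rintro _ ⟨j, ⟨hj, hPj⟩, rfl⟩
    exact ⟨by positivity, hPj⟩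

end Runner

namespace IntPartition

variable (p : IntPartition)

lemma lt_conj_iff (i j : ℕ) : i < p.conj j ↔ j < p.parts i :=
  ((IsLowerSet.mem_iff_lt_ncard (fun _ _ hba ha => lt_of_lt_of_le ha (p.antitone hba))
    (p.conj_set_finite j)) i).symm

lemma lt_durfee_iff (i : ℕ) : i < p.durfee ↔ i < p.parts i := by
  refine ((IsLowerSet.mem_iff_lt_ncard (fun a b hba (ha : a < p.parts a) => ?_)
    (p.finite_support.subset fun i (hi : i < p.parts i) => ?_)) i).symm
  · exact (hba.trans_lt ha).trans_le (p.antitone hba)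
  · rw [Function.mem_support]
    omega

def beta (i : ℕ) : ℤ := p.parts i - i - 1

lemma beta_strictAnti : StrictAnti p.beta := fun i j hij => by
  have := p.antitone hij.le
  simp only [beta]
  omega

lemma exists_beta_lt (m : ℤ) : ∃ i, p.beta i < m :=
  ⟨(p.parts 0 - m).toNat, by
    have := p.antitone (Nat.zero_le (p.parts 0 - m).toNat)
    simp only [beta]
    omega⟩

lemma conj_toNat_add_eq {n : ℕ} {m : ℤ} (habove : ∀ i < n, m < p.beta i)
    (hbelow : p.beta n < m) : p.conj (n + m).toNat = n := by
  have hlt : ∀ i, i < p.conj (n + m).toNat ↔ i < n := by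
    intro i
    rw [lt_conj_iff]
    constructor
    · intro h
      by_contra hi
      have := p.antitone (not_lt.1 hi)
      simp only [beta] at *
      omega
    · intro hi
      have := habove (n - 1) (by omega)
      have := p.antitone (show i ≤ n - 1 by omega)
      simp only [beta] at *
      omega
  by_contra hne
  rcases Nat.lt_or_gt_of_ne hne with h | h
  exacts [lt_irrefl _ ((hlt _).2 h), lt_irrefl _ ((hlt n).1 h)]

lemma zeroPos_conjugate_neg_sub_one_iff (m : ℤ) :
    zeroPos p.conjugate (-1 - m) ↔ ¬ zeroPos p m := by
  constructor
  · rintro ⟨j, hj⟩ ⟨i, hi⟩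
    change (p.conj j : ℤ) - j - 1 = -1 - m at hj
    have := p.lt_conj_iff i j
    omega
  · intro hm
    classical
    set n := Nat.find (p.exists_beta_lt m)
    have hbelow : p.beta n < m := Nat.find_spec (p.exists_beta_lt m)
    have habove : ∀ i < n, m < p.beta i := fun i hi =>
      lt_of_le_of_ne (not_lt.1 (Nat.find_min _ hi)) fun h => hm ⟨i, h.symm⟩
    have hconj := p.conj_toNat_add_eq habove hbelow
    simp only [beta] at hbelow
    exact ⟨(n + m).toNat, by change (p.conj _ : ℤ) - _ - 1 = _; rw [hconj]; omega⟩

variable {p}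

lemma IsDoubledDistinct.not_zeroPos_zero (h : p.IsDoubledDistinct) : ¬ zeroPos p 0 := by
  rintro ⟨i, hi⟩
  have hi' : i < p.parts i := by omega
  have := h i ((p.lt_durfee_iff i).2 hi')
  have := (p.lt_conj_iff i i).2 hi'
  omega

lemma IsDoubledDistinct.zeroPos_iff_not_zeroPos_neg (h : p.IsDoubledDistinct) {m : ℤ}
    (hm : 0 < m) : zeroPos p m ↔ ¬ zeroPos p (-m) := by
  rw [← zeroPos_conjugate_neg_sub_one_iff]
  constructor
  · rintro ⟨i, hi⟩
    have := h i ((p.lt_durfee_iff i).2 (by omega))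
    exact ⟨i, by change (p.conj i : ℤ) - i - 1 = _; omega⟩
  · rintro ⟨j, hj⟩
    change (p.conj j : ℤ) - j - 1 = -1 - -m at hj
    have hj' := (p.lt_conj_iff j j).1 (by omega)
    have := h j ((p.lt_durfee_iff j).2 hj')
    exact ⟨j, by omega⟩

lemma IsDoubledDistinct.isAntipodal (h : p.IsDoubledDistinct) : IsAntipodal (zeroPos p) := by
  refine ⟨h.not_zeroPos_zero, fun m hm => ?_⟩
  rcases hm.lt_or_gt with hm | hm
  · have := h.zeroPos_iff_not_zeroPos_neg (neg_pos.2 hm)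
    rw [neg_neg] at this
    tauto
  · exact h.zeroPos_iff_not_zeroPos_neg hm

variable (p)

lemma exists_parts_eq_zero : ∃ N, ∀ i, N ≤ i → p.parts i = 0 := by
  obtain ⟨N, hN⟩ := p.finite_support.bddAbove
  exact ⟨N + 1, fun i hi => by_contra fun h => by have := hN (Function.mem_support.2 h); omega⟩

lemma zeroPos_of_lt_neg {N : ℕ} (hN : ∀ i, N ≤ i → p.parts i = 0) {m : ℤ} (hm : m < -N) :
    zeroPos p m :=
  ⟨(-m - 1).toNat, by rw [hN _ (by omega)]; omega⟩

lemma setOf_le_beta_finite (c : ℤ) : {i | c ≤ p.beta i}.Finite := by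
  obtain ⟨i₀, hi₀⟩ := p.exists_beta_lt c
  exact (Set.finite_Iio i₀).subset fun i (hi : c ≤ p.beta i) =>
    not_le.1 fun h => (hi.trans (p.beta_strictAnti.antitone h)).not_gt hi₀

lemma setOf_le_zeroPos_eq_image (c : ℤ) :
    {m | c ≤ m ∧ zeroPos p m} = p.beta '' {i | c ≤ p.beta i} := by
  ext m
  constructor
  · rintro ⟨hm, i, rfl⟩
    exact ⟨i, hm, rfl⟩
  · rintro ⟨i, hi, rfl⟩
    exact ⟨hi, i, rfl⟩

lemma beadsFrom_zeroPos (c : ℤ) : beadsFrom (zeroPos p) c = {i | c ≤ p.beta i}.ncard := by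
  rw [beadsFrom, setOf_le_zeroPos_eq_image, Set.ncard_image_of_injective _
    p.beta_strictAnti.injective]

lemma setOf_le_zeroPos_finite (c : ℤ) : {m | c ≤ m ∧ zeroPos p m}.Finite := by
  rw [setOf_le_zeroPos_eq_image]
  exact (p.setOf_le_beta_finite c).image _

lemma setOf_lt_not_zeroPos_finite (c : ℤ) : {m | m < c ∧ ¬ zeroPos p m}.Finite := by
  obtain ⟨N, hN⟩ := p.exists_parts_eq_zero
  exact (Set.finite_Ico (-N : ℤ) c).subset fun m ⟨h1, h2⟩ =>
    ⟨not_lt.1 fun h => h2 (p.zeroPos_of_lt_neg hN h), h1⟩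

lemma durfee_eq_beadsFrom : p.durfee = beadsFrom (zeroPos p) 0 := by
  rw [beadsFrom_zeroPos, durfee]
  congr 1
  ext i
  simp only [Set.mem_ofPred_eq, beta]
  omega

lemma charge_zeroPos (c : ℤ) : charge (zeroPos p) c = 0 := by
  obtain ⟨N, hN⟩ := p.exists_parts_eq_zero
  have hgaps : gapsBelow (zeroPos p) (-N) = 0 := by
    rw [gapsBelow, Set.ncard_eq_zero (p.setOf_lt_not_zeroPos_finite _)]
    exact Set.eq_empty_of_forall_notMem fun m ⟨hm, hz⟩ => hz (p.zeroPos_of_lt_neg hN hm)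
  have hbeads : beadsFrom (zeroPos p) (-N) = N := by
    rw [beadsFrom_zeroPos]
    convert Set.ncard_Iio_nat N using 2
    ext i
    simp only [Set.mem_ofPred_eq, Set.mem_Iio, beta]
    constructor
    · intro h
      by_contra hi
      rw [hN i (by omega)] at h
      omega
    · intro hi
      omega
  have hbase : charge (zeroPos p) (-N) = 0 := by simp [charge, hgaps, hbeads]
  refine Int.inductionOn' c (-N) hbase (fun k _ hk => ?_) (fun k _ hk => ?_)
  · rwa [charge_add_one k (p.setOf_le_zeroPos_finite _) (p.setOf_lt_not_zeroPos_finite _)]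
  · rwa [← charge_add_one (k - 1) (p.setOf_le_zeroPos_finite _)
      (p.setOf_lt_not_zeroPos_finite _), sub_add_cancel]

end IntPartition

lemma charge_runner_of_iff {P : ℤ → Prop} {q : IntPartition} {t : ℕ} {k s : ℤ}
    (h : ∀ j, zeroPos q j ↔ P (t * (j + s) + k)) : charge (runner P t k) 0 = s := by
  rw [runner_eq_comp_sub h, charge_comp_sub, q.charge_zeroPos, zero_add]

lemma beadsFrom_runner_of_iff_neg {P : ℤ → Prop} {t : ℕ} {k s : ℤ}
    (h : ∀ j, P (t * (j + s) + k) ↔ j < 0) : beadsFrom (runner P t k) 0 = s.toNat := by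
  rw [runner_eq_comp_sub (Q := (· < 0)) fun j => (h j).symm, beadsFrom_comp_sub (Q := (· < 0)),
    beadsFrom_lt]
  simp

lemma IntPartition.durfee_eq_sum_runner (p : IntPartition) {t : ℕ} (ht : 0 < t) :
    p.durfee = ∑ k ∈ Finset.range t, beadsFrom (runner (zeroPos p) t k) 0 := by
  rw [durfee_eq_beadsFrom, beadsFrom_zero_eq_sum_runner ht (p.setOf_le_zeroPos_finite 0)]

theorem littlewood_delta_multiplicative (t' : ℕ) (lam core : IntPartition)
    (quot : ℕ → IntPartition) (hl : lam.IsDoubledDistinct)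
    (hL : IsLittlewood (2 * t' + 1) lam core quot) :
    lam.delta = core.delta * (quot 0).delta := by
  obtain ⟨s, hquot, hcore⟩ := hL
  have ht : 0 < 2 * t' + 1 := by omega
  set Z : ℕ → ℕ := fun k => beadsFrom (runner (zeroPos lam) (2 * t' + 1) k) 0
  set O : ℕ → ℕ := fun k => gapsBelow (runner (zeroPos lam) (2 * t' + 1) k) 0
  have hP := hl.isAntipodal
  have hs : ∀ k < 2 * t' + 1, s k = Z k - O k := fun k hk => by
    have := charge_runner_of_iff (hquot k hk)
    rwa [charge, add_zero, eq_comm] at this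
  have hZ0 : Z 0 = O 0 := by simpa [Z, O] using (hP.runner_zero ht).beadsFrom_zero
  have hcore_durfee : core.durfee = ∑ k ∈ Finset.range (2 * t' + 1), (Z k - O k) := by
    rw [core.durfee_eq_sum_runner ht]
    refine Finset.sum_congr rfl fun k hk => ?_
    obtain hk := Finset.mem_range.1 hk
    rw [beadsFrom_runner_of_iff_neg (hcore k hk), hs k hk]
    omega
  have hquot_durfee : (quot 0).durfee = Z 0 := by
    have hs0 : s 0 = 0 := by rw [hs 0 ht, hZ0, sub_self]
    change _ = beadsFrom (runner (zeroPos lam) (2 * t' + 1) ((0 : ℕ) : ℤ)) 0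
    rw [(quot 0).durfee_eq_beadsFrom, runner_eq_comp_sub (hquot 0 ht), beadsFrom_comp_sub, hs0,
      sub_zero]
  have hdurfee : lam.durfee = core.durfee + (quot 0).durfee
      + 2 * ∑ k ∈ Finset.range t', min (Z (k + 1)) (O (k + 1)) := by
    rw [lam.durfee_eq_sum_runner ht, hcore_durfee, hquot_durfee]
    exact sum_range_eq_sum_tsub_add_two_mul_sum_min Z O t' hZ0 fun k => hP.beadsFrom_runner_sub
  simp only [IntPartition.delta, hdurfee, pow_add, pow_mul, neg_one_sq, one_pow, mul_one]
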